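/- Let μ be a compactly supported Borel probability measure on ℝ^d, let B ⊂ ℝ^d be a finite set, let ν be a probability distribution on B, let c : ℝ^d × ℝ^d → ℝ≥0 be a continuous ground cost, and let δ > 0. Let P be a finite measurable partition of ℝ^d, with a representative point r(ϱ) ∈ ϱ chosen in each part ϱ, such that for every part ϱ, any two points x, y ∈ ϱ have the following property: for every weight function w : B → ℝ with values nonnegative integer multiples of δ and every b ∈ B, b is a weighted nearest neighbor of x with respect to w if and only if b is a weighted nearest neighbor of y with respect to w. Let w : B → ℝ be a weight function with values nonnegative integer multiples of δ, and suppose τ is a transport plan from μ to ν such that for every part ϱ ∈ P and every b ∈ B with τ_b(ϱ) > 0, the point b is a δ-approximate weighted nearest neighbor of r(ϱ) with respect to w. Then for every transport plan τ' from μ to ν, ¢(τ) ≤ ¢(τ') + δ. -/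

import Mathlib

/-!
Let `f x = min_b (c x b - w b)`. For every plan `σ`, the cost is `∑ b, ∫ (c x b - w b) dσ_b`
plus the plan-independent constant `∑ b, w b ν(b)`, and the first term is at least `∫ f dμ`.
For `τ`: if `τ_b(ϱ) > 0`, raising `w b` by `δ` keeps the weights on the grid `δ ℕ` and makes `b`
an exact weighted nearest neighbor of `r ϱ`, hence of every `x ∈ ϱ`; undoing the raise,
`c x b - w b ≤ f x + δ` on `ϱ`. Parts of `τ_b`-measure zero are negligible, so the first term
for `τ` is at most `∫ f dμ + δ`.
-/

open MeasureTheory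
open scoped ENNReal

noncomputable section

/-- A semi-discrete transport plan from a Borel probability measure `μ` on `ℝ^d` to the
discrete distribution `ν` supported on the finite set `B`. -/
def IsSemiDiscretePlan {d : ℕ} (μ : Measure (EuclideanSpace ℝ (Fin d)))
    (B : Finset (EuclideanSpace ℝ (Fin d))) (ν : EuclideanSpace ℝ (Fin d) → ℝ≥0∞)
    (τ : EuclideanSpace ℝ (Fin d) → Measure (EuclideanSpace ℝ (Fin d))) : Prop :=
  (∑ b ∈ B, τ b) = μ ∧ ∀ b ∈ B, τ b Set.univ = ν b

/-- The cost `¢(τ) = ∑_{b ∈ B} ∫ c(x,b) dτ_b(x)` of a semi-discrete transport plan. -/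
def planCost {d : ℕ} (c : EuclideanSpace ℝ (Fin d) → EuclideanSpace ℝ (Fin d) → ℝ)
    (B : Finset (EuclideanSpace ℝ (Fin d)))
    (τ : EuclideanSpace ℝ (Fin d) → Measure (EuclideanSpace ℝ (Fin d))) : ℝ :=
  ∑ b ∈ B, ∫ x, c x b ∂(τ b)

section WeightedNearestNeighbor

variable {ι : Type*} {B : Finset ι} (hB : B.Nonempty)

theorem Finset.eq_inf'_iff_forall_le {f : ι → ℝ} {b : ι} (hb : b ∈ B) :
    f b = B.inf' hB f ↔ ∀ b' ∈ B, f b ≤ f b' :=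
  ⟨fun h _ hb' => h ▸ B.inf'_le f hb',
    fun h => le_antisymm (B.le_inf' hB f h) (B.inf'_le f hb)⟩

/-- Raising the weight of `b` by `δ` turns `b` from a `δ`-approximate weighted nearest
neighbor into an exact one. -/
theorem le_inf'_sub_add_iff_eq_inf'_sub_update [DecidableEq ι] (a w : ι → ℝ) {b : ι}
    (hb : b ∈ B) {δ : ℝ} (hδ : 0 ≤ δ) :
    a b - w b ≤ B.inf' hB (fun b' => a b' - w b') + δ ↔
      a b - Function.update w b (w b + δ) b =
        B.inf' hB (fun b' => a b' - Function.update w b (w b + δ) b') := by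
  rw [Finset.eq_inf'_iff_forall_le hB hb (f := fun b' => a b' - Function.update w b (w b + δ) b'),
    ← sub_le_iff_le_add, Finset.le_inf'_iff]
  refine forall₂_congr fun b' _ => ?_
  rcases eq_or_ne b' b with rfl | hb'
  · simp only [Function.update_self]
    constructor <;> intro <;> linarith
  · simp only [Function.update_self, Function.update_of_ne hb']
    constructor <;> intro <;> linarith

theorem exists_nat_mul_update_add [DecidableEq ι] {w : ι → ℝ} {δ : ℝ}
    (hw : ∀ b ∈ B, ∃ k : ℕ, w b = k * δ) (b : ι) :
    ∀ b' ∈ B, ∃ k : ℕ, Function.update w b (w b + δ) b' = k * δ := by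
  intro b' hb'
  obtain ⟨k, hk⟩ := hw b' hb'
  rcases eq_or_ne b' b with rfl | hb'b
  · exact ⟨k + 1, by rw [Function.update_self, hk]; push_cast; ring⟩
  · exact ⟨k, by rw [Function.update_of_ne hb'b, hk]⟩

theorem le_inf'_add_of_sameWNN {X : Type*} (c : X → ι → ℝ) {δ : ℝ} (hδ : 0 ≤ δ) {x y : X}
    (hxy : ∀ w' : ι → ℝ, (∀ b ∈ B, ∃ k : ℕ, w' b = k * δ) → ∀ b ∈ B,
      (c x b - w' b = B.inf' hB (fun b' => c x b' - w' b') ↔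
        c y b - w' b = B.inf' hB (fun b' => c y b' - w' b')))
    {w : ι → ℝ} (hw : ∀ b ∈ B, ∃ k : ℕ, w b = k * δ) {b : ι} (hb : b ∈ B)
    (hy : c y b - w b ≤ B.inf' hB (fun b' => c y b' - w b') + δ) :
    c x b - w b ≤ B.inf' hB (fun b' => c x b' - w b') + δ := by
  classical
  exact (le_inf'_sub_add_iff_eq_inf'_sub_update hB (c x) w hb hδ).2 <|
    (hxy _ (exists_nat_mul_update_add hw b) b hb).2 <|
      (le_inf'_sub_add_iff_eq_inf'_sub_update hB (c y) w hb hδ).1 hy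

end WeightedNearestNeighbor

section Measure

variable {X : Type*} [MeasurableSpace X]

theorem ae_of_forall_mem_of_measure_ne_zero {μ : Measure X} {P : Set (Set X)}
    (hP : P.Countable) (hcover : ⋃₀ P = Set.univ) {Q : X → Prop}
    (hQ : ∀ ϱ ∈ P, μ ϱ ≠ 0 → ∀ x ∈ ϱ, Q x) : ∀ᵐ x ∂μ, Q x := by
  rw [ae_iff]
  refine measure_mono_null (t := ⋃ ϱ ∈ {ϱ ∈ P | μ ϱ = 0}, ϱ) ?_
    ((measure_biUnion_null_iff (hP.mono (Set.sep_subset _ _))).2 fun _ h => h.2)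
  intro x hx
  obtain ⟨ϱ, hϱ, hxϱ⟩ := Set.mem_sUnion.1 (hcover ▸ Set.mem_univ x)
  exact Set.mem_biUnion ⟨hϱ, by_contra fun h => hx (hQ ϱ hϱ h x hxϱ)⟩ hxϱ

theorem Continuous.integrable_of_measure_compl_eq_zero [TopologicalSpace X]
    [OpensMeasurableSpace X] {μ : Measure X} [IsFiniteMeasure μ] {K : Set X}
    (hK : IsCompact K) (hμK : μ Kᶜ = 0) {g : X → ℝ} (hg : Continuous g) : Integrable g μ := by
  obtain ⟨M, hM⟩ := hK.exists_bound_of_continuousOn hg.continuousOn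
  refine (integrable_const M).mono' hg.aestronglyMeasurable ?_
  exact measure_mono_null (fun x hx hxK => hx (hM x hxK)) hμK

variable {ι : Type*} {B : Finset ι} {μ : Measure X} {σ : ι → Measure X}

theorem integral_le_sum_integral (hσ : ∑ b ∈ B, σ b = μ) {f : X → ℝ} {g : ι → X → ℝ}
    (hf : Integrable f μ) (hg : ∀ b ∈ B, Integrable (g b) (σ b))
    (hfg : ∀ b ∈ B, ∀ᵐ x ∂σ b, f x ≤ g b x) :
    ∫ x, f x ∂μ ≤ ∑ b ∈ B, ∫ x, g b x ∂σ b := by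
  subst hσ
  rw [integral_finsetSum_measure (integrable_finsetSum_measure.1 hf)]
  exact Finset.sum_le_sum fun b hb =>
    integral_mono_ae (integrable_finsetSum_measure.1 hf b hb) (hg b hb) (hfg b hb)

theorem sum_integral_le_integral (hσ : ∑ b ∈ B, σ b = μ) {f : X → ℝ} {g : ι → X → ℝ}
    (hf : Integrable f μ) (hg : ∀ b ∈ B, Integrable (g b) (σ b))
    (hgf : ∀ b ∈ B, ∀ᵐ x ∂σ b, g b x ≤ f x) :
    ∑ b ∈ B, ∫ x, g b x ∂σ b ≤ ∫ x, f x ∂μ := by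
  subst hσ
  rw [integral_finsetSum_measure (integrable_finsetSum_measure.1 hf)]
  exact Finset.sum_le_sum fun b hb =>
    integral_mono_ae (hg b hb) (integrable_finsetSum_measure.1 hf b hb) (hgf b hb)

end Measure
namespace IsSemiDiscretePlan

variable {d : ℕ} {μ : Measure (EuclideanSpace ℝ (Fin d))} {B : Finset (EuclideanSpace ℝ (Fin d))}
  {ν : EuclideanSpace ℝ (Fin d) → ℝ≥0∞}
  {τ : EuclideanSpace ℝ (Fin d) → Measure (EuclideanSpace ℝ (Fin d))}

theorem integrable (hτ : IsSemiDiscretePlan μ B ν τ) {g : EuclideanSpace ℝ (Fin d) → ℝ}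
    (hg : Integrable g μ) {b : EuclideanSpace ℝ (Fin d)} (hb : b ∈ B) : Integrable g (τ b) :=
  integrable_finsetSum_measure.1 (hτ.1 ▸ hg) b hb

/-- Shifting the cost `c(·, b)` by the weight `w b` changes the cost of every plan by the
same amount `∑ b, w b ν(b)`. -/
theorem planCost_eq_sum_integral_sub_add (hτ : IsSemiDiscretePlan μ B ν τ) [IsFiniteMeasure μ]
    {c : EuclideanSpace ℝ (Fin d) → EuclideanSpace ℝ (Fin d) → ℝ}
    (hc : ∀ b ∈ B, Integrable (c · b) μ) (w : EuclideanSpace ℝ (Fin d) → ℝ) :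
    planCost c B τ = ∑ b ∈ B, ∫ x, (c x b - w b) ∂τ b + ∑ b ∈ B, w b * (ν b).toReal := by
  rw [planCost, ← Finset.sum_add_distrib]
  refine Finset.sum_congr rfl fun b hb => ?_
  rw [integral_sub (hτ.integrable (hc b hb) hb) (hτ.integrable (integrable_const (w b)) hb),
    integral_const, measureReal_def, hτ.2 b hb, smul_eq_mul]
  ring

end IsSemiDiscretePlan

theorem partition_delta_wnn_plan_is_delta_close_general {d : ℕ}
    (μ : Measure (EuclideanSpace ℝ (Fin d))) [IsProbabilityMeasure μ]
    (hμc : ∃ K : Set (EuclideanSpace ℝ (Fin d)), IsCompact K ∧ μ Kᶜ = 0)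
    (B : Finset (EuclideanSpace ℝ (Fin d))) (hB : B.Nonempty)
    (ν : EuclideanSpace ℝ (Fin d) → ℝ≥0∞)
    (c : EuclideanSpace ℝ (Fin d) → EuclideanSpace ℝ (Fin d) → ℝ)
    (hccont : Continuous fun p : EuclideanSpace ℝ (Fin d) × EuclideanSpace ℝ (Fin d) =>
      c p.1 p.2)
    (δ : ℝ) (hδ : 0 < δ)
    -- `P` is a finite measurable partition of `ℝ^d`:
    (P : Finset (Set (EuclideanSpace ℝ (Fin d))))
    (hPcover : ⋃₀ (P : Set (Set (EuclideanSpace ℝ (Fin d)))) = Set.univ)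
    -- representative points:
    (r : Set (EuclideanSpace ℝ (Fin d)) → EuclideanSpace ℝ (Fin d))
    (hr : ∀ ϱ ∈ P, r ϱ ∈ ϱ)
    -- any two points of a part have the same weighted nearest neighbors for every weight
    -- function whose values are nonnegative integer multiples of `δ`:
    (hP : ∀ ϱ ∈ P, ∀ x ∈ ϱ, ∀ y ∈ ϱ,
      ∀ w' : EuclideanSpace ℝ (Fin d) → ℝ,
        (∀ b ∈ B, ∃ k : ℕ, w' b = (k : ℝ) * δ) → ∀ b ∈ B,
          (c x b - w' b = B.inf' hB (fun b' => c x b' - w' b') ↔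
           c y b - w' b = B.inf' hB (fun b' => c y b' - w' b')))
    -- the weight function:
    (w : EuclideanSpace ℝ (Fin d) → ℝ)
    (hw : ∀ b ∈ B, ∃ k : ℕ, w b = (k : ℝ) * δ)
    -- the transport plan:
    (τ : EuclideanSpace ℝ (Fin d) → Measure (EuclideanSpace ℝ (Fin d)))
    (hτ : IsSemiDiscretePlan μ B ν τ)
    (hWNN : ∀ ϱ ∈ P, ∀ b ∈ B, τ b ϱ ≠ 0 →
      c (r ϱ) b - w b ≤ B.inf' hB (fun b' => c (r ϱ) b' - w b') + δ) :
    ∀ τ' : EuclideanSpace ℝ (Fin d) → Measure (EuclideanSpace ℝ (Fin d)),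
      IsSemiDiscretePlan μ B ν τ' → planCost c B τ ≤ planCost c B τ' + δ := by
  intro τ' hτ'
  obtain ⟨K, hK, hμK⟩ := hμc
  have hint {g : EuclideanSpace ℝ (Fin d) → ℝ} (hg : Continuous g) : Integrable g μ :=
    hg.integrable_of_measure_compl_eq_zero hK hμK
  have hc (b : EuclideanSpace ℝ (Fin d)) : Continuous (c · b) :=
    hccont.comp (continuous_id.prodMk continuous_const)
  set f := fun x => B.inf' hB fun b => c x b - w b
  have hf : Continuous f := Continuous.finset_inf'_apply hB fun b _ => (hc b).sub continuous_const
  have hτ_approx (b) (hb : b ∈ B) : ∀ᵐ x ∂τ b, c x b - w b ≤ f x + δ :=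
    ae_of_forall_mem_of_measure_ne_zero P.countable_toSet hPcover fun ϱ hϱ hτϱ x hx =>
      le_inf'_add_of_sameWNN hB c hδ.le (hP ϱ hϱ x hx (r ϱ) (hr ϱ hϱ)) hw hb (hWNN ϱ hϱ b hb hτϱ)
  have lower : ∫ x, f x ∂μ ≤ ∑ b ∈ B, ∫ x, (c x b - w b) ∂τ' b :=
    integral_le_sum_integral hτ'.1 (hint hf)
      (fun b hb => hτ'.integrable (hint ((hc b).sub continuous_const)) hb)
      fun b hb => ae_of_all _ fun x => B.inf'_le _ hb
  have upper : ∑ b ∈ B, ∫ x, (c x b - w b) ∂τ b ≤ ∫ x, (f x + δ) ∂μ :=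
    sum_integral_le_integral hτ.1 (hint (hf.add continuous_const))
      (fun b hb => hτ.integrable (hint ((hc b).sub continuous_const)) hb) hτ_approx
  rw [integral_add (hint hf) (integrable_const δ), integral_const, probReal_univ, one_smul]
    at upper
  rw [hτ.planCost_eq_sum_integral_sub_add (fun b _ => hint (hc b)) w,
    hτ'.planCost_eq_sum_integral_sub_add (fun b _ => hint (hc b)) w]
  linarith

/-- If `P` is a finite measurable partition of `ℝ^d` whose parts are cells of the arrangement
of all weighted Voronoi diagrams for weight vectors with values nonnegative integer multiples
of `δ`, `w` is such a weight vector, and `τ` is a transport plan that transports mass from a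
part `ϱ` to `b` only when `b` is a `δ`-approximate weighted nearest neighbor of the
representative `r ϱ`, then `τ` is `δ`-close. -/
theorem partition_delta_wnn_plan_is_delta_close {d : ℕ}
    (μ : Measure (EuclideanSpace ℝ (Fin d))) [IsProbabilityMeasure μ]
    (hμc : ∃ K : Set (EuclideanSpace ℝ (Fin d)), IsCompact K ∧ μ Kᶜ = 0)
    (B : Finset (EuclideanSpace ℝ (Fin d))) (hB : B.Nonempty)
    (ν : EuclideanSpace ℝ (Fin d) → ℝ≥0∞) (hν : ∑ b ∈ B, ν b = 1)
    (c : EuclideanSpace ℝ (Fin d) → EuclideanSpace ℝ (Fin d) → ℝ)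
    (hc0 : ∀ x y, 0 ≤ c x y)
    (hccont : Continuous fun p : EuclideanSpace ℝ (Fin d) × EuclideanSpace ℝ (Fin d) =>
      c p.1 p.2)
    (δ : ℝ) (hδ : 0 < δ)
    -- `P` is a finite measurable partition of `ℝ^d`:
    (P : Finset (Set (EuclideanSpace ℝ (Fin d))))
    (hPmeas : ∀ ϱ ∈ P, MeasurableSet ϱ)
    (hPdisj : ∀ ϱ₁ ∈ P, ∀ ϱ₂ ∈ P, ϱ₁ ≠ ϱ₂ → Disjoint ϱ₁ ϱ₂)
    (hPcover : ⋃₀ (P : Set (Set (EuclideanSpace ℝ (Fin d)))) = Set.univ)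
    -- representative points:
    (r : Set (EuclideanSpace ℝ (Fin d)) → EuclideanSpace ℝ (Fin d))
    (hr : ∀ ϱ ∈ P, r ϱ ∈ ϱ)
    -- any two points of a part have the same weighted nearest neighbors for every weight
    -- function whose values are nonnegative integer multiples of `δ`:
    (hP : ∀ ϱ ∈ P, ∀ x ∈ ϱ, ∀ y ∈ ϱ,
      ∀ w' : EuclideanSpace ℝ (Fin d) → ℝ,
        (∀ b ∈ B, ∃ k : ℕ, w' b = (k : ℝ) * δ) → ∀ b ∈ B,
          (c x b - w' b = B.inf' hB (fun b' => c x b' - w' b') ↔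
           c y b - w' b = B.inf' hB (fun b' => c y b' - w' b')))
    -- the weight function:
    (w : EuclideanSpace ℝ (Fin d) → ℝ)
    (hw : ∀ b ∈ B, ∃ k : ℕ, w b = (k : ℝ) * δ)
    -- the transport plan:
    (τ : EuclideanSpace ℝ (Fin d) → Measure (EuclideanSpace ℝ (Fin d)))
    (hτ : IsSemiDiscretePlan μ B ν τ)
    (hWNN : ∀ ϱ ∈ P, ∀ b ∈ B, τ b ϱ ≠ 0 →
      c (r ϱ) b - w b ≤ B.inf' hB (fun b' => c (r ϱ) b' - w b') + δ) :
    ∀ τ' : EuclideanSpace ℝ (Fin d) → Measure (EuclideanSpace ℝ (Fin d)),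
      IsSemiDiscretePlan μ B ν τ' → planCost c B τ ≤ planCost c B τ' + δ :=
  partition_delta_wnn_plan_is_delta_close_general μ hμc B hB ν c hccont δ hδ P hPcover r hr hP w hw
    τ hτ hWNN
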